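/- arXiv:1202.0972 — 2 statements merged into one kernel-verified Lean document; each statement's English description precedes it below -/
import Mathlib

section
/- Let X ∈ W with X ≠ 0 and let Z ∈ ℂ³ satisfy ⟨Z,X⟩ = 0 (evaluation pairing). Define the complex gradient vector BZ ∈ ℂ³ by (BZ)₁₂ = (Z₁₂−Z₃₁)/m₁ + (Z₁₂−Z₂₃)/m₂, (BZ)₃₁ = (Z₃₁−Z₁₂)/m₁ + (Z₃₁−Z₂₃)/m₃, (BZ)₂₃ = (Z₂₃−Z₁₂)/m₂ + (Z₂₃−Z₃₁)/m₃ (so that BZ is the gradient of K at Z in the paper's complex convention). Then |X|²·BZ = conj(⟨Z, e(X)⟩)·e(X), where e(X) = sqrt(m₁m₂m₃/m)·(conj(X₃₁)/m₂ − conj(X₂₃)/m₁, conj(X₂₃)/m₁ − conj(X₁₂)/m₃, conj(X₁₂)/m₃ − conj(X₃₁)/m₂) and |X| is the mass norm. In particular |X|²·BZ lies in W and is mass-orthogonal to X. -/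
noncomputable section
open Complex ComplexConjugate

/-- Hermitian evaluation pairing `⟨P,Q⟩`. -/
def epair (P Q : ℂ × ℂ × ℂ) : ℂ :=
  conj P.1 * Q.1 + conj P.2.1 * Q.2.1 + conj P.2.2 * Q.2.2

/-- Hermitian mass metric `⟨V,W⟩ₘ`. -/
def massInner (m₁ m₂ m₃ : ℝ) (V W : ℂ × ℂ × ℂ) : ℂ :=
  ((m₁ * m₂ : ℝ) : ℂ) * conj V.1 * W.1 / ((m₁ + m₂ + m₃ : ℝ) : ℂ) +
    ((m₃ * m₁ : ℝ) : ℂ) * conj V.2.1 * W.2.1 / ((m₁ + m₂ + m₃ : ℝ) : ℂ) +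
    ((m₂ * m₃ : ℝ) : ℂ) * conj V.2.2 * W.2.2 / ((m₁ + m₂ + m₃ : ℝ) : ℂ)

/-- Squared mass norm `|Q|²`. -/
def massSq (m₁ m₂ m₃ : ℝ) (Q : ℂ × ℂ × ℂ) : ℝ :=
  (m₁ * m₂ * Complex.normSq Q.1 + m₃ * m₁ * Complex.normSq Q.2.1 +
    m₂ * m₃ * Complex.normSq Q.2.2) / (m₁ + m₂ + m₃)

/-- The Fubini–Study unit tangent vector field `e(X)`. -/
def eX (m₁ m₂ m₃ : ℝ) (X : ℂ × ℂ × ℂ) : ℂ × ℂ × ℂ :=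
  ((Real.sqrt (m₁ * m₂ * m₃ / (m₁ + m₂ + m₃)) : ℝ) : ℂ) •
    (conj X.2.1 / (m₂ : ℂ) - conj X.2.2 / (m₁ : ℂ),
     conj X.2.2 / (m₁ : ℂ) - conj X.1 / (m₃ : ℂ),
     conj X.1 / (m₃ : ℂ) - conj X.2.1 / (m₂ : ℂ))

/-- The complex gradient of `K` at `Z`, i.e. `BZ`. -/
def BZvec (m₁ m₂ m₃ : ℝ) (Z : ℂ × ℂ × ℂ) : ℂ × ℂ × ℂ :=
  ((Z.1 - Z.2.1) / (m₁ : ℂ) + (Z.1 - Z.2.2) / (m₂ : ℂ),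
   (Z.2.1 - Z.1) / (m₁ : ℂ) + (Z.2.1 - Z.2.2) / (m₃ : ℂ),
   (Z.2.2 - Z.1) / (m₂ : ℂ) + (Z.2.2 - Z.2.1) / (m₃ : ℂ))

/-!
Write `u = (1, 1, 1)` and `g = (1/m₃, 1/m₂, 1/m₁)`, and use the bilinear dot and cross products
on `ℂ³`. Then `K(P) = ½ ∑ₖ gₖ |(u ⨯₃ P)ₖ|²`, so `BZ = (g * (u ⨯₃ Z)) ⨯₃ u`; moreover
`e(X) = √(m₁m₂m₃/m) • (g * X̄) ⨯₃ u` and `|X|² = (m₁m₂m₃/m) (g * X) ⬝ᵥ X̄`. The hypotheses say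
that `X̄` is orthogonal to both `u` and `Z`, so the vector triple product gives
`(u ⨯₃ Z) ⨯₃ X̄ = 0`: the vector `u ⨯₃ Z` is proportional to `X̄`, namely
`(y ⬝ᵥ X̄) • (u ⨯₃ Z) = (y ⬝ᵥ (u ⨯₃ Z)) • X̄` for every `y`. With `y = g * X` this turns
`|X|² • BZ` into a multiple of `e(X)`, and the cyclic symmetry of the triple product identifies
the coefficient as `conj ⟨Z, e(X)⟩`. Finally `e(X)` is mass-orthogonal to `X` because
`(g * X̄) ⬝ᵥ (g * X̄) ⨯₃ u = 0`.
-/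

open Matrix

section CrossProduct

variable {R : Type*} [CommRing R]

theorem cross_cross_eq_zero_of_dotProduct_eq_zero {u z y : Fin 3 → R}
    (hu : u ⬝ᵥ y = 0) (hz : z ⬝ᵥ y = 0) : u ⨯₃ z ⨯₃ y = 0 := by
  rw [cross_cross_eq_smul_sub_smul, hu, hz, zero_smul, zero_smul, sub_zero]

theorem dotProduct_smul_eq_of_cross_eq_zero {w y : Fin 3 → R} (h : w ⨯₃ y = 0)
    (y' : Fin 3 → R) : (y' ⬝ᵥ y) • w = (y' ⬝ᵥ w) • y := by
  have := cross_cross_eq_smul_sub_smul' y' w y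
  rw [h, map_zero, dotProduct_comm w, eq_comm, sub_eq_zero] at this
  exact this

theorem smul_mul_cross_cross_eq {g u y z : Fin 3 → R} (hu : u ⬝ᵥ y = 0) (hz : z ⬝ᵥ y = 0)
    (y' : Fin 3 → R) :
    (y' ⬝ᵥ y) • ((g * u ⨯₃ z) ⨯₃ u) = (z ⬝ᵥ y' ⨯₃ u) • ((g * y) ⨯₃ u) := by
  have key := dotProduct_smul_eq_of_cross_eq_zero
    (cross_cross_eq_zero_of_dotProduct_eq_zero hu hz) y'
  rw [triple_product_permutation, triple_product_permutation] at key
  rw [← LinearMap.smul_apply, ← map_smul, ← mul_smul_comm, key, mul_smul_comm, map_smul,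
    LinearMap.smul_apply]

end CrossProduct

def toFin3 (P : ℂ × ℂ × ℂ) : Fin 3 → ℂ := ![P.1, P.2.1, P.2.2]

def massWeights (m₁ m₂ m₃ : ℝ) : Fin 3 → ℂ := ![(m₃ : ℂ)⁻¹, (m₂ : ℂ)⁻¹, (m₁ : ℂ)⁻¹]

theorem toFin3_injective : Function.Injective toFin3 := by
  rintro ⟨a, b, c⟩ ⟨a', b', c'⟩ h
  simp_all [toFin3, funext_iff, Fin.forall_fin_succ]

theorem toFin3_smul (c : ℂ) (P : ℂ × ℂ × ℂ) : toFin3 (c • P) = c • toFin3 P := by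
  simp [toFin3]

theorem conj_epair (P Q : ℂ × ℂ × ℂ) : conj (epair P Q) = toFin3 P ⬝ᵥ star (toFin3 Q) := by
  simp [epair, toFin3, dotProduct, Fin.sum_univ_three, mul_comm]

theorem one_dotProduct_star_toFin3 {X : ℂ × ℂ × ℂ} (hW : X.1 + X.2.1 + X.2.2 = 0) :
    1 ⬝ᵥ star (toFin3 X) = 0 := by
  simpa [toFin3, dotProduct, Fin.sum_univ_three] using congrArg conj hW

theorem toFin3_BZvec (m₁ m₂ m₃ : ℝ) (Z : ℂ × ℂ × ℂ) :
    toFin3 (BZvec m₁ m₂ m₃ Z) = (massWeights m₁ m₂ m₃ * 1 ⨯₃ toFin3 Z) ⨯₃ 1 := by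
  ext i
  fin_cases i <;>
  · simp only [toFin3, BZvec, massWeights, cross_apply, Pi.mul_apply, Pi.one_apply,
      Fin.zero_eta, Fin.mk_one, Fin.reduceFinMk, cons_val, cons_val_zero, cons_val_one,
      Fin.isValue, one_mul, mul_one]
    ring

theorem toFin3_eX (m₁ m₂ m₃ : ℝ) (X : ℂ × ℂ × ℂ) :
    toFin3 (eX m₁ m₂ m₃ X) = ((√(m₁ * m₂ * m₃ / (m₁ + m₂ + m₃)) : ℝ) : ℂ) •
      ((massWeights m₁ m₂ m₃ * star (toFin3 X)) ⨯₃ 1) := by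
  ext i
  fin_cases i <;>
  · simp only [toFin3, eX, massWeights, cross_apply, Prod.smul_mk, smul_eq_mul, Pi.mul_apply,
      Pi.smul_apply, Pi.one_apply, Pi.star_apply, RCLike.star_def, Fin.zero_eta, Fin.mk_one,
      Fin.reduceFinMk, cons_val, cons_val_zero, cons_val_one, Fin.isValue, mul_one]
    ring

theorem star_toFin3_eX (m₁ m₂ m₃ : ℝ) (X : ℂ × ℂ × ℂ) :
    star (toFin3 (eX m₁ m₂ m₃ X)) = ((√(m₁ * m₂ * m₃ / (m₁ + m₂ + m₃)) : ℝ) : ℂ) •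
      ((massWeights m₁ m₂ m₃ * toFin3 X) ⨯₃ 1) := by
  ext i
  fin_cases i <;>
  · simp only [toFin3, eX, massWeights, cross_apply, Prod.smul_mk, smul_eq_mul, Pi.mul_apply,
      Pi.smul_apply, Pi.one_apply, Pi.star_apply, RCLike.star_def, Fin.zero_eta, Fin.mk_one,
      Fin.reduceFinMk, cons_val, cons_val_zero, cons_val_one, Fin.isValue, mul_one, map_mul,
      map_sub, map_div₀, conj_ofReal, conj_conj]
    ring

theorem massSq_eq {m₁ m₂ m₃ : ℝ} (hm₁ : m₁ ≠ 0) (hm₂ : m₂ ≠ 0) (hm₃ : m₃ ≠ 0)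
    (X : ℂ × ℂ × ℂ) :
    ((massSq m₁ m₂ m₃ X : ℝ) : ℂ) = ((m₁ * m₂ * m₃ / (m₁ + m₂ + m₃) : ℝ) : ℂ) *
      ((massWeights m₁ m₂ m₃ * toFin3 X) ⬝ᵥ star (toFin3 X)) := by
  simp only [massSq, massWeights, toFin3, dotProduct, Fin.sum_univ_three, Pi.mul_apply,
    Pi.star_apply, RCLike.star_def, cons_val, cons_val_zero, cons_val_one, Fin.isValue]
  push_cast [← mul_conj]
  field_simp [ofReal_ne_zero.mpr hm₁, ofReal_ne_zero.mpr hm₂, ofReal_ne_zero.mpr hm₃]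

theorem massInner_eq {m₁ m₂ m₃ : ℝ} (hm₁ : m₁ ≠ 0) (hm₂ : m₂ ≠ 0) (hm₃ : m₃ ≠ 0)
    (X V : ℂ × ℂ × ℂ) :
    massInner m₁ m₂ m₃ X V = ((m₁ * m₂ * m₃ / (m₁ + m₂ + m₃) : ℝ) : ℂ) *
      ((massWeights m₁ m₂ m₃ * star (toFin3 X)) ⬝ᵥ toFin3 V) := by
  simp only [massInner, massWeights, toFin3, dotProduct, Fin.sum_univ_three, Pi.mul_apply,
    Pi.star_apply, RCLike.star_def, cons_val, cons_val_zero, cons_val_one, Fin.isValue]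
  push_cast
  field_simp [ofReal_ne_zero.mpr hm₁, ofReal_ne_zero.mpr hm₂, ofReal_ne_zero.mpr hm₃]

theorem BZvec_sum_eq_zero (m₁ m₂ m₃ : ℝ) (Z : ℂ × ℂ × ℂ) :
    (BZvec m₁ m₂ m₃ Z).1 + (BZvec m₁ m₂ m₃ Z).2.1 + (BZvec m₁ m₂ m₃ Z).2.2 = 0 := by
  simp only [BZvec]
  ring

theorem massInner_smul_right (m₁ m₂ m₃ : ℝ) (c : ℂ) (X V : ℂ × ℂ × ℂ) :
    massInner m₁ m₂ m₃ X (c • V) = c * massInner m₁ m₂ m₃ X V := by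
  simp only [massInner, Prod.smul_fst, Prod.smul_snd, smul_eq_mul]
  ring

theorem massInner_eX_eq_zero {m₁ m₂ m₃ : ℝ} (hm₁ : m₁ ≠ 0) (hm₂ : m₂ ≠ 0) (hm₃ : m₃ ≠ 0)
    (X : ℂ × ℂ × ℂ) : massInner m₁ m₂ m₃ X (eX m₁ m₂ m₃ X) = 0 := by
  rw [massInner_eq hm₁ hm₂ hm₃, toFin3_eX, dotProduct_smul, dot_self_cross, smul_zero,
    mul_zero]

theorem massSq_smul_BZvec_eq {m₁ m₂ m₃ : ℝ} (hm₁ : 0 < m₁) (hm₂ : 0 < m₂) (hm₃ : 0 < m₃)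
    {X Z : ℂ × ℂ × ℂ} (hW : X.1 + X.2.1 + X.2.2 = 0) (hZ : epair Z X = 0) :
    ((massSq m₁ m₂ m₃ X : ℝ) : ℂ) • BZvec m₁ m₂ m₃ Z =
      conj (epair Z (eX m₁ m₂ m₃ X)) • eX m₁ m₂ m₃ X := by
  set κ : ℝ := m₁ * m₂ * m₃ / (m₁ + m₂ + m₃)
  have hκ : ((√κ : ℝ) : ℂ) * ((√κ : ℝ) : ℂ) = κ := by
    rw [← ofReal_mul, Real.mul_self_sqrt (by positivity)]
  have hZX : toFin3 Z ⬝ᵥ star (toFin3 X) = 0 := by rw [← conj_epair, hZ, map_zero]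
  have key := smul_mul_cross_cross_eq (g := massWeights m₁ m₂ m₃)
    (one_dotProduct_star_toFin3 hW) hZX (massWeights m₁ m₂ m₃ * toFin3 X)
  apply toFin3_injective
  rw [toFin3_smul, toFin3_smul, massSq_eq hm₁.ne' hm₂.ne' hm₃.ne', toFin3_BZvec, mul_smul, key,
    conj_epair, star_toFin3_eX, toFin3_eX, dotProduct_smul, smul_eq_mul, smul_smul, smul_smul]
  congr 1
  linear_combination (toFin3 Z ⬝ᵥ (massWeights m₁ m₂ m₃ * toFin3 X) ⨯₃ 1) * hκ.symm

theorem stmt9_general (m₁ m₂ m₃ : ℝ) (hm₁ : 0 < m₁) (hm₂ : 0 < m₂) (hm₃ : 0 < m₃)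
    (X Z : ℂ × ℂ × ℂ)
    (hW : X.1 + X.2.1 + X.2.2 = 0)
    (hZ : epair Z X = 0) :
    ((massSq m₁ m₂ m₃ X : ℝ) : ℂ) • BZvec m₁ m₂ m₃ Z =
        conj (epair Z (eX m₁ m₂ m₃ X)) • eX m₁ m₂ m₃ X ∧
    (((massSq m₁ m₂ m₃ X : ℝ) : ℂ) • BZvec m₁ m₂ m₃ Z).1 +
      (((massSq m₁ m₂ m₃ X : ℝ) : ℂ) • BZvec m₁ m₂ m₃ Z).2.1 +
      (((massSq m₁ m₂ m₃ X : ℝ) : ℂ) • BZvec m₁ m₂ m₃ Z).2.2 = 0 ∧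
    massInner m₁ m₂ m₃ X (((massSq m₁ m₂ m₃ X : ℝ) : ℂ) • BZvec m₁ m₂ m₃ Z) = 0 := by
  have hmain := massSq_smul_BZvec_eq hm₁ hm₂ hm₃ hW hZ
  refine ⟨hmain, ?_, ?_⟩
  · simp only [Prod.smul_fst, Prod.smul_snd, smul_eq_mul, ← mul_add, BZvec_sum_eq_zero,
      mul_zero]
  · rw [hmain, massInner_smul_right, massInner_eX_eq_zero hm₁.ne' hm₂.ne' hm₃.ne', mul_zero]

/-- `|X|²·BZ = conj(⟨Z,e(X)⟩)·e(X)`, and in particular `|X|²·BZ ∈ W`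
and is mass-orthogonal to `X`. -/
theorem stmt9 (m₁ m₂ m₃ : ℝ) (hm₁ : 0 < m₁) (hm₂ : 0 < m₂) (hm₃ : 0 < m₃)
    (X Z : ℂ × ℂ × ℂ)
    (hW : X.1 + X.2.1 + X.2.2 = 0) (hX : X ≠ 0)
    (hZ : epair Z X = 0) :
    ((massSq m₁ m₂ m₃ X : ℝ) : ℂ) • BZvec m₁ m₂ m₃ Z =
        conj (epair Z (eX m₁ m₂ m₃ X)) • eX m₁ m₂ m₃ X ∧
    (((massSq m₁ m₂ m₃ X : ℝ) : ℂ) • BZvec m₁ m₂ m₃ Z).1 +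
      (((massSq m₁ m₂ m₃ X : ℝ) : ℂ) • BZvec m₁ m₂ m₃ Z).2.1 +
      (((massSq m₁ m₂ m₃ X : ℝ) : ℂ) • BZvec m₁ m₂ m₃ Z).2.2 = 0 ∧
    massInner m₁ m₂ m₃ X (((massSq m₁ m₂ m₃ X : ℝ) : ℂ) • BZvec m₁ m₂ m₃ Z) = 0 :=
  stmt9_general m₁ m₂ m₃ hm₁ hm₂ hm₃ X Z hW hZ
end
end

section
/- Let z ∈ C with z₁₂, z₃₁, z₂₃ all nonzero and let v, w ∈ ℂ³ be tangent to C at z, i.e. z₁₂v₁₂ + z₃₁v₃₁ + z₂₃v₂₃ = 0 and z₁₂w₁₂ + z₃₁w₃₁ + z₂₃w₂₃ = 0. Set X = (z₁₂², z₃₁², z₂₃²) ∈ W, Dv = (2z₁₂v₁₂, 2z₃₁v₃₁, 2z₂₃v₂₃), Dw = (2z₁₂w₁₂, 2z₃₁w₃₁, 2z₂₃w₂₃), ρᵢⱼ = |zᵢⱼ|², ‖z‖² = ρ₁₂+ρ₃₁+ρ₂₃, and λ(z) = 4·m₁m₂m₃·ρ₁₂ρ₃₁ρ₂₃·‖z‖²/(m·|X|⁴),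 where |X| is the mass norm. Then the pull-back of the Fubini–Study metric of the mass metric equals λ(z) times the Fubini–Study metric of the standard Hermitian metric: (⟨Dv,Dw⟩ₘ·|X|² − ⟨Dv,X⟩ₘ·⟨X,Dw⟩ₘ)/|X|⁴ = λ(z)·(⟨v,w⟩₂·‖z‖² − ⟨v,z⟩₂·⟨z,w⟩₂)/‖z‖⁴. -/
/-!
Both sides are Fubini–Study numerators `H(v,w) H(z,z) - H(v,z) H(z,w)` of diagonal Hermitian
forms `H` on `ℂ³`: pulling the mass metric back along `z ↦ (z₁₂², z₃₁², z₂₃²)` gives the weights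
`mᵢmⱼ ρᵢⱼ / m`, the standard metric has weights `1`. By Lagrange's identity such a numerator is
the form with the pairwise products of the weights, evaluated on `v × z` and `w × z`.
For `z` on the cone and `v` tangent, `v × z` is bilinearly orthogonal to `z` and `v`, hence to the
whole tangent plane `z^⊥ ∋ z`, so it is a multiple of `z`. Both numerators are therefore the same
multiple of the pairwise-product form at `(z, z)`, which is `m₁m₂m₃ ρ₁₂ρ₃₁ρ₂₃ / m` for the mass
weights and `‖z‖²` for the standard ones.
-/

noncomputable section
open Complex ComplexConjugate

/-- Standard Hermitian inner product on ℂ³. -/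
def stdInner (v w : ℂ × ℂ × ℂ) : ℂ :=
  conj v.1 * w.1 + conj v.2.1 * w.2.1 + conj v.2.2 * w.2.2

def weightedInner (p V W : ℂ × ℂ × ℂ) : ℂ :=
  p.1 * conj V.1 * W.1 + p.2.1 * conj V.2.1 * W.2.1 + p.2.2 * conj V.2.2 * W.2.2

def fubiniStudyNum (p z v w : ℂ × ℂ × ℂ) : ℂ :=
  weightedInner p v w * weightedInner p z z - weightedInner p v z * weightedInner p z w

def cross (v z : ℂ × ℂ × ℂ) : ℂ × ℂ × ℂ :=
  (v.2.1 * z.2.2 - v.2.2 * z.2.1, v.2.2 * z.1 - v.1 * z.2.2, v.1 * z.2.1 - v.2.1 * z.1)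

-- Weights of the induced form on `Λ²ℂ³`, identified with `ℂ³` through `cross`.
def wedgeWeight (p : ℂ × ℂ × ℂ) : ℂ × ℂ × ℂ :=
  (p.2.1 * p.2.2, p.2.2 * p.1, p.1 * p.2.1)

theorem weightedInner_smul_smul (p V W : ℂ × ℂ × ℂ) (a b : ℂ) :
    weightedInner p (a • V) (b • W) = conj a * b * weightedInner p V W := by
  simp only [weightedInner, Prod.smul_fst, Prod.smul_snd, smul_eq_mul, map_mul]
  ring

theorem fubiniStudyNum_eq_weightedInner_cross (p z v w : ℂ × ℂ × ℂ) :
    fubiniStudyNum p z v w = weightedInner (wedgeWeight p) (cross v z) (cross w z) := by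
  simp only [fubiniStudyNum, weightedInner, wedgeWeight, cross, map_sub, map_mul]
  ring

theorem smul_cross_of_isotropic {z v : ℂ × ℂ × ℂ}
    (hz : z.1 ^ 2 + z.2.1 ^ 2 + z.2.2 ^ 2 = 0) (hv : z.1 * v.1 + z.2.1 * v.2.1 + z.2.2 * v.2.2 = 0) :
    z.1 • cross v z = (cross v z).1 • z := by
  refine Prod.ext (by simp only [cross, Prod.smul_fst, smul_eq_mul]; ring) (Prod.ext ?_ ?_) <;>
    simp only [cross, Prod.smul_fst, Prod.smul_snd, smul_eq_mul]
  · linear_combination v.2.2 * hz - z.2.2 * hv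
  · linear_combination z.2.1 * hv - v.2.1 * hz

theorem fubiniStudyNum_mul_eq {z v w : ℂ × ℂ × ℂ} (hz₁ : z.1 ≠ 0)
    (hz : z.1 ^ 2 + z.2.1 ^ 2 + z.2.2 ^ 2 = 0)
    (hv : z.1 * v.1 + z.2.1 * v.2.1 + z.2.2 * v.2.2 = 0)
    (hw : z.1 * w.1 + z.2.1 * w.2.1 + z.2.2 * w.2.2 = 0) (p r : ℂ × ℂ × ℂ) :
    fubiniStudyNum p z v w * weightedInner (wedgeWeight r) z z =
      fubiniStudyNum r z v w * weightedInner (wedgeWeight p) z z := by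
  have hρ : conj z.1 * z.1 ≠ 0 := mul_ne_zero ((map_ne_zero _).2 hz₁) hz₁
  have hcross : ∀ q, conj z.1 * z.1 * fubiniStudyNum q z v w =
      conj (cross v z).1 * (cross w z).1 * weightedInner (wedgeWeight q) z z := fun q => by
    rw [fubiniStudyNum_eq_weightedInner_cross, ← weightedInner_smul_smul,
      smul_cross_of_isotropic hz hv, smul_cross_of_isotropic hz hw, weightedInner_smul_smul]
  refine mul_left_cancel₀ hρ ?_
  linear_combination
    weightedInner (wedgeWeight r) z z * hcross p - weightedInner (wedgeWeight p) z z * hcross r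

theorem stdInner_eq_weightedInner (v w : ℂ × ℂ × ℂ) : stdInner v w = weightedInner 1 v w := by
  simp [stdInner, weightedInner]

theorem weightedInner_one_self (z : ℂ × ℂ × ℂ) :
    weightedInner 1 z z = ((normSq z.1 + normSq z.2.1 + normSq z.2.2 : ℝ) : ℂ) := by
  simp only [weightedInner, Prod.fst_one, Prod.snd_one, one_mul, ofReal_add,
    normSq_eq_conj_mul_self]

theorem wedgeWeight_one : wedgeWeight 1 = 1 := by
  simp [wedgeWeight]

theorem massSq_pos {m₁ m₂ m₃ : ℝ} (hm₁ : 0 < m₁) (hm₂ : 0 < m₂) (hm₃ : 0 < m₃)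
    {Q : ℂ × ℂ × ℂ} (hQ : Q.1 ≠ 0) : 0 < massSq m₁ m₂ m₃ Q := by
  have h₁ : 0 < m₁ * m₂ * normSq Q.1 := by have := normSq_pos.2 hQ; positivity
  have h₂ : 0 ≤ m₃ * m₁ * normSq Q.2.1 := by have := normSq_nonneg Q.2.1; positivity
  have h₃ : 0 ≤ m₂ * m₃ * normSq Q.2.2 := by have := normSq_nonneg Q.2.2; positivity
  unfold massSq
  positivity

def massWeight (m₁ m₂ m₃ : ℝ) (z : ℂ × ℂ × ℂ) : ℂ × ℂ × ℂ :=
  (((m₁ * m₂ * normSq z.1 / (m₁ + m₂ + m₃) : ℝ) : ℂ),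
    ((m₃ * m₁ * normSq z.2.1 / (m₁ + m₂ + m₃) : ℝ) : ℂ),
    ((m₂ * m₃ * normSq z.2.2 / (m₁ + m₂ + m₃) : ℝ) : ℂ))

section massWeight

variable (m₁ m₂ m₃ : ℝ) (z v w : ℂ × ℂ × ℂ)

theorem massInner_mul_mul :
    massInner m₁ m₂ m₃ (2 * z.1 * v.1, 2 * z.2.1 * v.2.1, 2 * z.2.2 * v.2.2)
      (2 * z.1 * w.1, 2 * z.2.1 * w.2.1, 2 * z.2.2 * w.2.2) =
      4 * weightedInner (massWeight m₁ m₂ m₃ z) v w := by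
  simp only [massInner, weightedInner, massWeight, map_mul, map_ofNat, ofReal_div, ofReal_mul,
    normSq_eq_conj_mul_self]
  ring

theorem massInner_mul_sq :
    massInner m₁ m₂ m₃ (2 * z.1 * v.1, 2 * z.2.1 * v.2.1, 2 * z.2.2 * v.2.2)
      (z.1 ^ 2, z.2.1 ^ 2, z.2.2 ^ 2) = 2 * weightedInner (massWeight m₁ m₂ m₃ z) v z := by
  simp only [massInner, weightedInner, massWeight, map_mul, map_ofNat, ofReal_div, ofReal_mul,
    normSq_eq_conj_mul_self]
  ring

theorem massInner_sq_mul :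
    massInner m₁ m₂ m₃ (z.1 ^ 2, z.2.1 ^ 2, z.2.2 ^ 2)
      (2 * z.1 * w.1, 2 * z.2.1 * w.2.1, 2 * z.2.2 * w.2.2) =
      2 * weightedInner (massWeight m₁ m₂ m₃ z) z w := by
  simp only [massInner, weightedInner, massWeight, map_pow, ofReal_div, ofReal_mul,
    normSq_eq_conj_mul_self]
  ring

theorem massSq_sq :
    (massSq m₁ m₂ m₃ (z.1 ^ 2, z.2.1 ^ 2, z.2.2 ^ 2) : ℂ) =
      weightedInner (massWeight m₁ m₂ m₃ z) z z := by
  simp only [massSq, weightedInner, massWeight, ofReal_div, ofReal_add, ofReal_mul,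
    ofReal_pow, normSq_eq_conj_mul_self, map_pow]
  ring

theorem weightedInner_wedgeWeight_massWeight (hm : m₁ + m₂ + m₃ ≠ 0) :
    weightedInner (wedgeWeight (massWeight m₁ m₂ m₃ z)) z z =
      ((m₁ * m₂ * m₃ * normSq z.1 * normSq z.2.1 * normSq z.2.2 / (m₁ + m₂ + m₃) : ℝ) : ℂ) := by
  have hm' : ((m₁ + m₂ + m₃ : ℝ) : ℂ) ≠ 0 := ofReal_ne_zero.2 hm
  simp only [weightedInner, wedgeWeight, massWeight, ofReal_div, ofReal_mul,
    normSq_eq_conj_mul_self] at hm' ⊢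
  field_simp
  push_cast
  ring

end massWeight

theorem stmt18_general (m₁ m₂ m₃ : ℝ) (hm₁ : 0 < m₁) (hm₂ : 0 < m₂) (hm₃ : 0 < m₃)
    (z v w : ℂ × ℂ × ℂ)
    (hC : z.1 ^ 2 + z.2.1 ^ 2 + z.2.2 ^ 2 = 0)
    (h12 : z.1 ≠ 0)
    (hv : z.1 * v.1 + z.2.1 * v.2.1 + z.2.2 * v.2.2 = 0)
    (hw : z.1 * w.1 + z.2.1 * w.2.1 + z.2.2 * w.2.2 = 0) :
    let X : ℂ × ℂ × ℂ := (z.1 ^ 2, z.2.1 ^ 2, z.2.2 ^ 2)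
    let Dv : ℂ × ℂ × ℂ := (2 * z.1 * v.1, 2 * z.2.1 * v.2.1, 2 * z.2.2 * v.2.2)
    let Dw : ℂ × ℂ × ℂ := (2 * z.1 * w.1, 2 * z.2.1 * w.2.1, 2 * z.2.2 * w.2.2)
    let ρ₁₂ : ℝ := Complex.normSq z.1
    let ρ₃₁ : ℝ := Complex.normSq z.2.1
    let ρ₂₃ : ℝ := Complex.normSq z.2.2
    let nz : ℝ := ρ₁₂ + ρ₃₁ + ρ₂₃
    let nX : ℝ := massSq m₁ m₂ m₃ X
    let lam : ℝ := 4 * m₁ * m₂ * m₃ * ρ₁₂ * ρ₃₁ * ρ₂₃ * nz / ((m₁ + m₂ + m₃) * nX ^ 2)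
    (massInner m₁ m₂ m₃ Dv Dw * (nX : ℂ) -
        massInner m₁ m₂ m₃ Dv X * massInner m₁ m₂ m₃ X Dw) / (nX : ℂ) ^ 2
      = (lam : ℂ) *
        ((stdInner v w * (nz : ℂ) - stdInner v z * stdInner z w) / (nz : ℂ) ^ 2) := by
  intro X Dv Dw ρ₁₂ ρ₃₁ ρ₂₃ nz nX lam
  have hm : m₁ + m₂ + m₃ ≠ 0 := by positivity
  have hnz : (nz : ℂ) ≠ 0 := ofReal_ne_zero.2 <| ne_of_gt <| by
    linarith [normSq_pos.2 h12, normSq_nonneg z.2.1, normSq_nonneg z.2.2]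
  have hnum := fubiniStudyNum_mul_eq h12 hC hv hw (massWeight m₁ m₂ m₃ z) 1
  rw [wedgeWeight_one, weightedInner_one_self,
    weightedInner_wedgeWeight_massWeight m₁ m₂ m₃ z hm] at hnum
  have hmass : massInner m₁ m₂ m₃ Dv Dw * (nX : ℂ) -
      massInner m₁ m₂ m₃ Dv X * massInner m₁ m₂ m₃ X Dw =
        4 * fubiniStudyNum (massWeight m₁ m₂ m₃ z) z v w := by
    rw [massInner_mul_mul, massInner_mul_sq, massInner_sq_mul, massSq_sq, fubiniStudyNum]
    ring
  have hstd : stdInner v w * (nz : ℂ) - stdInner v z * stdInner z w = fubiniStudyNum 1 z v w := by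
    simp only [stdInner_eq_weightedInner, fubiniStudyNum, weightedInner_one_self, nz, ρ₁₂, ρ₃₁,
      ρ₂₃]
  rw [hmass, hstd]
  have hnX : (nX : ℂ) ≠ 0 := ofReal_ne_zero.2 (massSq_pos hm₁ hm₂ hm₃ (pow_ne_zero 2 h12)).ne'
  simp only [lam, nz, ρ₁₂, ρ₃₁, ρ₂₃] at hnz ⊢
  push_cast at hnum hnz ⊢
  field_simp
  linear_combination hnum

/-- the pull-back under the squaring map of the Fubini–Study metric of
the mass metric is `λ(z)` times the Fubini–Study metric of the standard Hermitian
metric on the cone `C`. -/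
theorem stmt18 (m₁ m₂ m₃ : ℝ) (hm₁ : 0 < m₁) (hm₂ : 0 < m₂) (hm₃ : 0 < m₃)
    (z v w : ℂ × ℂ × ℂ)
    (hC : z.1 ^ 2 + z.2.1 ^ 2 + z.2.2 ^ 2 = 0)
    (h12 : z.1 ≠ 0) (h31 : z.2.1 ≠ 0) (h23 : z.2.2 ≠ 0)
    (hv : z.1 * v.1 + z.2.1 * v.2.1 + z.2.2 * v.2.2 = 0)
    (hw : z.1 * w.1 + z.2.1 * w.2.1 + z.2.2 * w.2.2 = 0) :
    let X : ℂ × ℂ × ℂ := (z.1 ^ 2, z.2.1 ^ 2, z.2.2 ^ 2)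
    let Dv : ℂ × ℂ × ℂ := (2 * z.1 * v.1, 2 * z.2.1 * v.2.1, 2 * z.2.2 * v.2.2)
    let Dw : ℂ × ℂ × ℂ := (2 * z.1 * w.1, 2 * z.2.1 * w.2.1, 2 * z.2.2 * w.2.2)
    let ρ₁₂ : ℝ := Complex.normSq z.1
    let ρ₃₁ : ℝ := Complex.normSq z.2.1
    let ρ₂₃ : ℝ := Complex.normSq z.2.2
    let nz : ℝ := ρ₁₂ + ρ₃₁ + ρ₂₃
    let nX : ℝ := massSq m₁ m₂ m₃ X
    let lam : ℝ := 4 * m₁ * m₂ * m₃ * ρ₁₂ * ρ₃₁ * ρ₂₃ * nz / ((m₁ + m₂ + m₃) * nX ^ 2)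
    (massInner m₁ m₂ m₃ Dv Dw * (nX : ℂ) -
        massInner m₁ m₂ m₃ Dv X * massInner m₁ m₂ m₃ X Dw) / (nX : ℂ) ^ 2
      = (lam : ℂ) *
        ((stdInner v w * (nz : ℂ) - stdInner v z * stdInner z w) / (nz : ℂ) ^ 2) :=
  stmt18_general m₁ m₂ m₃ hm₁ hm₂ hm₃ z v w hC h12 hv hw
end
end
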